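/- Let $X_i = AS_i + H_i$ with $A$ invertible and the processes $(S_i)$ and $(H_i)$ independent of each other. Fix a lag $\tau$ and indices $k, l$ with $\operatorname{Cov}(H_k, H_{k-\tau}) = \operatorname{Cov}(H_l, H_{l-\tau})$. If $\operatorname{Cov}(S_k, S_{k-\tau})$ and $\operatorname{Cov}(S_l, S_{l-\tau})$ are diagonal, then with $V = A^{-1}$, $V(\operatorname{Cov}(X_k, X_{k-\tau}) - \operatorname{Cov}(X_l, X_{l-\tau}))V^\top$ equals $\operatorname{Cov}(S_k, S_{k-\tau}) - \operatorname{Cov}(S_l, S_{l-\tau})$ and is diagonal. -/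

import Mathlib

open Matrix MeasureTheory ProbabilityTheory

/-- Cross-covariance matrix `Cov(X, Y)` of two `ℝ^d`-valued random vectors. -/
noncomputable def covMat {Ω : Type*} [MeasurableSpace Ω] (μ : Measure Ω) {d : ℕ}
    (X Y : Ω → Fin d → ℝ) : Matrix (Fin d) (Fin d) ℝ :=
  Matrix.of fun i j =>
    ∫ ω, (X ω i - ∫ ω', X ω' i ∂μ) * (Y ω j - ∫ ω', Y ω' j ∂μ) ∂μ

/-!
Independence of the sources from the confounders kills the cross terms, so
`Cov(X_k, X_{k-τ}) = A Cov(S_k, S_{k-τ}) Aᵀ + Cov(H_k, H_{k-τ})`, and likewise for `l`.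
The confounding terms agree and cancel in the difference, and conjugating by `V = A⁻¹`
leaves the difference of the two diagonal lagged source covariances.
-/

section CovMat

variable {Ω : Type*} [MeasurableSpace Ω] {μ : Measure Ω} {d : ℕ}

lemma covMat_apply (X Y : Ω → Fin d → ℝ) (i j : Fin d) :
    covMat μ X Y i j = cov[fun ω => X ω i, fun ω => Y ω j; μ] :=
  rfl

lemma covMat_transpose (X Y : Ω → Fin d → ℝ) : (covMat μ X Y)ᵀ = covMat μ Y X := by
  ext i j
  simp only [transpose_apply, covMat_apply, covariance_comm]

lemma memLp_mulVec_apply {X : Ω → Fin d → ℝ} (hX : ∀ i, MemLp (fun ω => X ω i) 2 μ)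
    (A : Matrix (Fin d) (Fin d) ℝ) (i : Fin d) :
    MemLp (fun ω => (A *ᵥ X ω) i) 2 μ := by
  simp only [mulVec, dotProduct]
  exact memLp_finsetSum _ fun k _ => (hX k).const_mul (A i k)

lemma covMat_eq_zero_of_indepFun {X Y : Ω → Fin d → ℝ} (hXY : IndepFun X Y μ)
    (hX : ∀ i, MemLp (fun ω => X ω i) 2 μ) (hY : ∀ i, MemLp (fun ω => Y ω i) 2 μ) :
    covMat μ X Y = 0 := by
  ext i j
  exact (hXY.comp (measurable_pi_apply i) (measurable_pi_apply j)).covariance_eq_zero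
    (hX i) (hY j)

variable [IsFiniteMeasure μ]

lemma covMat_add_left {X X' Y : Ω → Fin d → ℝ} (hX : ∀ i, MemLp (fun ω => X ω i) 2 μ)
    (hX' : ∀ i, MemLp (fun ω => X' ω i) 2 μ) (hY : ∀ i, MemLp (fun ω => Y ω i) 2 μ) :
    covMat μ (fun ω => X ω + X' ω) Y = covMat μ X Y + covMat μ X' Y := by
  ext i j
  exact covariance_add_left (hX i) (hX' i) (hY j)

lemma covMat_add_right {X Y Y' : Ω → Fin d → ℝ} (hX : ∀ i, MemLp (fun ω => X ω i) 2 μ)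
    (hY : ∀ i, MemLp (fun ω => Y ω i) 2 μ) (hY' : ∀ i, MemLp (fun ω => Y' ω i) 2 μ) :
    covMat μ X (fun ω => Y ω + Y' ω) = covMat μ X Y + covMat μ X Y' := by
  rw [← covMat_transpose, covMat_add_left hY hY' hX, transpose_add, covMat_transpose,
    covMat_transpose]

lemma covMat_mulVec_left {X Y : Ω → Fin d → ℝ} (hX : ∀ i, MemLp (fun ω => X ω i) 2 μ)
    (hY : ∀ i, MemLp (fun ω => Y ω i) 2 μ) (A : Matrix (Fin d) (Fin d) ℝ) :
    covMat μ (fun ω => A *ᵥ X ω) Y = A * covMat μ X Y := by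
  ext i j
  simp only [covMat_apply, mul_apply, mulVec, dotProduct]
  rw [covariance_fun_sum_left (fun k => (hX k).const_mul (A i k)) (hY j)]
  simp only [covariance_const_mul_left]

lemma covMat_mulVec_right {X Y : Ω → Fin d → ℝ} (hX : ∀ i, MemLp (fun ω => X ω i) 2 μ)
    (hY : ∀ i, MemLp (fun ω => Y ω i) 2 μ) (B : Matrix (Fin d) (Fin d) ℝ) :
    covMat μ X (fun ω => B *ᵥ Y ω) = covMat μ X Y * Bᵀ := by
  rw [← covMat_transpose, covMat_mulVec_left hY hX, transpose_mul, covMat_transpose]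

lemma covMat_mulVec_add_mulVec_add {S S' H H' : Ω → Fin d → ℝ}
    (hS : ∀ i, MemLp (fun ω => S ω i) 2 μ) (hS' : ∀ i, MemLp (fun ω => S' ω i) 2 μ)
    (hH : ∀ i, MemLp (fun ω => H ω i) 2 μ) (hH' : ∀ i, MemLp (fun ω => H' ω i) 2 μ)
    (A B : Matrix (Fin d) (Fin d) ℝ) :
    covMat μ (fun ω => A *ᵥ S ω + H ω) (fun ω => B *ᵥ S' ω + H' ω) =
      A * covMat μ S S' * Bᵀ + A * covMat μ S H' + covMat μ H S' * Bᵀ + covMat μ H H' := by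
  have hAS := memLp_mulVec_apply hS A
  have hBS' := memLp_mulVec_apply hS' B
  have hY : ∀ j, MemLp (fun ω => (B *ᵥ S' ω + H' ω) j) 2 μ := fun j => (hBS' j).add (hH' j)
  rw [covMat_add_left hAS hH hY, covMat_add_right hAS hBS' hH',
    covMat_add_right hH hBS' hH', covMat_mulVec_right hAS hS' B, covMat_mulVec_right hH hS' B,
    covMat_mulVec_left hS hS' A, covMat_mulVec_left hS hH' A]
  abel

lemma covMat_mulVec_add_of_indepFun {S S' H H' : Ω → Fin d → ℝ}
    (hS : ∀ i, MemLp (fun ω => S ω i) 2 μ) (hS' : ∀ i, MemLp (fun ω => S' ω i) 2 μ)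
    (hH : ∀ i, MemLp (fun ω => H ω i) 2 μ) (hH' : ∀ i, MemLp (fun ω => H' ω i) 2 μ)
    (hindep : IndepFun (fun ω => (S ω, S' ω)) (fun ω => (H ω, H' ω)) μ)
    (A : Matrix (Fin d) (Fin d) ℝ) :
    covMat μ (fun ω => A *ᵥ S ω + H ω) (fun ω => A *ᵥ S' ω + H' ω) =
      A * covMat μ S S' * Aᵀ + covMat μ H H' := by
  have hSH' : covMat μ S H' = 0 :=
    covMat_eq_zero_of_indepFun (hindep.comp measurable_fst measurable_snd) hS hH'
  have hHS' : covMat μ H S' = 0 :=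
    covMat_eq_zero_of_indepFun (hindep.comp measurable_snd measurable_fst).symm hH hS'
  rw [covMat_mulVec_add_mulVec_add hS hS' hH hH', hSH', hHS', Matrix.mul_zero,
    Matrix.zero_mul, add_zero, add_zero]

end CovMat

lemma inv_mul_mul_mul_transpose_mul_transpose_inv {n R : Type*} [Fintype n] [DecidableEq n]
    [CommRing R] {A : Matrix n n R} (hA : IsUnit A) (D : Matrix n n R) :
    A⁻¹ * (A * D * Aᵀ) * A⁻¹ᵀ = D := by
  have hAinv : A⁻¹ * A = 1 := A.nonsing_inv_mul ((A.isUnit_iff_isUnit_det).mp hA)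
  calc A⁻¹ * (A * D * Aᵀ) * A⁻¹ᵀ = A⁻¹ * A * D * (A⁻¹ * A)ᵀ := by
        simp only [transpose_mul, Matrix.mul_assoc]
    _ = D := by rw [hAinv, transpose_one, Matrix.one_mul, Matrix.mul_one]

theorem stmt4_general {Ω : Type*} [MeasurableSpace Ω] (μ : Measure Ω) [IsProbabilityMeasure μ]
    {d : ℕ} (Sk Skτ Sl Slτ Hk Hkτ Hl Hlτ : Ω → Fin d → ℝ)
    (hS2 : ∀ i, MemLp (fun ω => Sk ω i) 2 μ ∧ MemLp (fun ω => Skτ ω i) 2 μ ∧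
      MemLp (fun ω => Sl ω i) 2 μ ∧ MemLp (fun ω => Slτ ω i) 2 μ)
    (hH2 : ∀ i, MemLp (fun ω => Hk ω i) 2 μ ∧ MemLp (fun ω => Hkτ ω i) 2 μ ∧
      MemLp (fun ω => Hl ω i) 2 μ ∧ MemLp (fun ω => Hlτ ω i) 2 μ)
    (hindepk : IndepFun (fun ω => (Sk ω, Skτ ω)) (fun ω => (Hk ω, Hkτ ω)) μ)
    (hindepl : IndepFun (fun ω => (Sl ω, Slτ ω)) (fun ω => (Hl ω, Hlτ ω)) μ)
    (hstat : covMat μ Hk Hkτ = covMat μ Hl Hlτ)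
    (hdiagk : (covMat μ Sk Skτ).IsDiag) (hdiagl : (covMat μ Sl Slτ).IsDiag)
    (A : Matrix (Fin d) (Fin d) ℝ) (hA : IsUnit A)
    (Xk Xkτ Xl Xlτ : Ω → Fin d → ℝ)
    (hXk : ∀ ω, Xk ω = A.mulVec (Sk ω) + Hk ω)
    (hXkτ : ∀ ω, Xkτ ω = A.mulVec (Skτ ω) + Hkτ ω)
    (hXl : ∀ ω, Xl ω = A.mulVec (Sl ω) + Hl ω)
    (hXlτ : ∀ ω, Xlτ ω = A.mulVec (Slτ ω) + Hlτ ω)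
    (V : Matrix (Fin d) (Fin d) ℝ) (hV : V = A⁻¹) :
    V * (covMat μ Xk Xkτ - covMat μ Xl Xlτ) * Vᵀ = covMat μ Sk Skτ - covMat μ Sl Slτ ∧
      (V * (covMat μ Xk Xkτ - covMat μ Xl Xlτ) * Vᵀ).IsDiag := by
  have hk : covMat μ Xk Xkτ = A * covMat μ Sk Skτ * Aᵀ + covMat μ Hk Hkτ := by
    rw [funext hXk, funext hXkτ]
    exact covMat_mulVec_add_of_indepFun (fun i => (hS2 i).1) (fun i => (hS2 i).2.1)
      (fun i => (hH2 i).1) (fun i => (hH2 i).2.1) hindepk A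
  have hl : covMat μ Xl Xlτ = A * covMat μ Sl Slτ * Aᵀ + covMat μ Hl Hlτ := by
    rw [funext hXl, funext hXlτ]
    exact covMat_mulVec_add_of_indepFun (fun i => (hS2 i).2.2.1) (fun i => (hS2 i).2.2.2)
      (fun i => (hH2 i).2.2.1) (fun i => (hH2 i).2.2.2) hindepl A
  have hdiff : V * (covMat μ Xk Xkτ - covMat μ Xl Xlτ) * Vᵀ =
      covMat μ Sk Skτ - covMat μ Sl Slτ := by
    rw [hk, hl, hstat, add_sub_add_right_eq_sub, ← Matrix.sub_mul, ← Matrix.mul_sub, hV,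
      inv_mul_mul_mul_transpose_mul_transpose_inv hA]
  exact ⟨hdiff, hdiff ▸ hdiagk.sub hdiagl⟩

/-- Auto-covariance analog of the diagonalization identity: with group-wise stationary
lagged confounding covariance, differences of lagged observed covariances are
diagonalized by `V = A⁻¹`.  Here `Skτ`, `Hkτ`, ... stand for `S_{k-τ}`, `H_{k-τ}`, .... -/
theorem stmt4 {Ω : Type*} [MeasurableSpace Ω] (μ : Measure Ω) [IsProbabilityMeasure μ]
    {d : ℕ} (Sk Skτ Sl Slτ Hk Hkτ Hl Hlτ : Ω → Fin d → ℝ)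
    (hmeas : Measurable Sk ∧ Measurable Skτ ∧ Measurable Sl ∧ Measurable Slτ ∧
      Measurable Hk ∧ Measurable Hkτ ∧ Measurable Hl ∧ Measurable Hlτ)
    (hS2 : ∀ i, MemLp (fun ω => Sk ω i) 2 μ ∧ MemLp (fun ω => Skτ ω i) 2 μ ∧
      MemLp (fun ω => Sl ω i) 2 μ ∧ MemLp (fun ω => Slτ ω i) 2 μ)
    (hH2 : ∀ i, MemLp (fun ω => Hk ω i) 2 μ ∧ MemLp (fun ω => Hkτ ω i) 2 μ ∧
      MemLp (fun ω => Hl ω i) 2 μ ∧ MemLp (fun ω => Hlτ ω i) 2 μ)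
    (hindepk : IndepFun (fun ω => (Sk ω, Skτ ω)) (fun ω => (Hk ω, Hkτ ω)) μ)
    (hindepl : IndepFun (fun ω => (Sl ω, Slτ ω)) (fun ω => (Hl ω, Hlτ ω)) μ)
    (hstat : covMat μ Hk Hkτ = covMat μ Hl Hlτ)
    (hdiagk : (covMat μ Sk Skτ).IsDiag) (hdiagl : (covMat μ Sl Slτ).IsDiag)
    (A : Matrix (Fin d) (Fin d) ℝ) (hA : IsUnit A)
    (Xk Xkτ Xl Xlτ : Ω → Fin d → ℝ)
    (hXk : ∀ ω, Xk ω = A.mulVec (Sk ω) + Hk ω)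
    (hXkτ : ∀ ω, Xkτ ω = A.mulVec (Skτ ω) + Hkτ ω)
    (hXl : ∀ ω, Xl ω = A.mulVec (Sl ω) + Hl ω)
    (hXlτ : ∀ ω, Xlτ ω = A.mulVec (Slτ ω) + Hlτ ω)
    (V : Matrix (Fin d) (Fin d) ℝ) (hV : V = A⁻¹) :
    V * (covMat μ Xk Xkτ - covMat μ Xl Xlτ) * Vᵀ = covMat μ Sk Skτ - covMat μ Sl Slτ ∧
      (V * (covMat μ Xk Xkτ - covMat μ Xl Xlτ) * Vᵀ).IsDiag :=
  stmt4_general μ Sk Skτ Sl Slτ Hk Hkτ Hl Hlτ hS2 hH2 hindepk hindepl hstat hdiagk hdiagl A hA Xk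
    Xkτ Xl Xlτ hXk hXkτ hXl hXlτ V hV
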